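/- Let c ≥ 1 and let A be a finite-dimensional commutative unital ℝ-algebra with a ℤ/cℤ-grading A = ⊕_{k ∈ ℤ/cℤ} A_k (so A_k·A_l ⊆ A_{k+l} and 1 ∈ A_0). Suppose there is an ℝ-linear form φ_0 : A_0 → ℝ with φ_0(1) = 1 such that the bilinear form Q_0(a,b) = φ_0(ab) on A_0 is positive definite. Let k be an integer with gcd(k, c) = 1. If there exists a ∈ A_k (the graded piece of degree k mod c) such that multiplication by a is injective on A, then A is semisimple (its Jacobson radical is zero). -/

import Mathlib

/-!
Injective multiplication on a finite-dimensional algebra makes `a` a unit, and as `k` is prime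
to `c` its powers reach every degree, so every graded piece `A j` is a translate `u A₀` of `A₀`
by a homogeneous unit. Hence for `v ∈ A₀` the trace of multiplication by `v` on `A` is `c`
times its trace on `A₀`. On `A₀` the form `φ₀(xy)` is an inner product for which
multiplication by `v` is self-adjoint, so `Tr(v²) > 0` for `v ≠ 0`. If `x ≠ 0` were
nilpotent, choose `j` with `xⱼ ≠ 0`, a unit `u` of degree `-j` and `v = u xⱼ ∈ A₀`: the
degree-zero part of the nilpotent element `x u v` is `v²`, and since homogeneous elements of
nonzero degree have trace zero, `0 = Tr(x u v) = Tr(v²) > 0`.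
-/

open DirectSum

section GradedUnits

variable {ι A σ : Type*} [DecidableEq ι] [AddGroup ι] [Semiring A] [SetLike σ A]
  [AddSubmonoidClass σ A] (𝒜 : ι → σ) [GradedRing 𝒜]

theorem Units.coe_inv_mem_graded {u : Aˣ} {i : ι} (hu : (u : A) ∈ 𝒜 i) :
    ((u⁻¹ : Aˣ) : A) ∈ 𝒜 (-i) := by
  have h := coe_decompose_mul_add_of_left_mem 𝒜 (j := -i) (b := ((u⁻¹ : Aˣ) : A)) hu
  rw [Units.mul_inv, add_neg_cancel, decompose_of_mem_same 𝒜 (SetLike.one_mem_graded 𝒜)] at h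
  rw [Units.inv_eq_of_mul_eq_one_right h.symm]
  exact SetLike.coe_mem _

end GradedUnits

theorem exists_unit_mem_graded_of_isCoprime {A σ : Type*} [Monoid A] [SetLike σ A] {c : ℕ}
    [NeZero c] (𝒜 : ZMod c → σ) [SetLike.GradedMonoid 𝒜] {k : ℤ} (hk : IsCoprime k c)
    {a : Aˣ} (ha : (a : A) ∈ 𝒜 k) (j : ZMod c) : ∃ u : Aˣ, (u : A) ∈ 𝒜 j := by
  refine ⟨a ^ (j * (k : ZMod c)⁻¹).val, ?_⟩
  rw [Units.val_pow_eq_pow_val]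
  convert SetLike.pow_mem_graded (j * (k : ZMod c)⁻¹).val ha using 2
  rw [nsmul_eq_mul, ZMod.natCast_zmod_val, mul_assoc, ZMod.coe_int_inv_mul_eq_one hk, mul_one]

def Units.mulGradeZeroEquiv {ι K A : Type*} [DecidableEq ι] [AddGroup ι] [CommSemiring K]
    [Semiring A] [Algebra K A] (𝒜 : ι → Submodule K A) [GradedAlgebra 𝒜] {u : Aˣ} {i : ι}
    (hu : (u : A) ∈ 𝒜 i) : 𝒜 0 ≃ₗ[K] 𝒜 i where
  toFun x := ⟨u * x, by simpa using SetLike.mul_mem_graded hu x.2⟩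
  invFun y := ⟨↑u⁻¹ * y, by simpa using SetLike.mul_mem_graded (u.coe_inv_mem_graded 𝒜 hu) y.2⟩
  map_add' x y := Subtype.ext (mul_add _ _ _)
  map_smul' r x := Subtype.ext (mul_smul_comm r _ _)
  left_inv x := Subtype.ext (u.inv_mul_cancel_left x)
  right_inv y := Subtype.ext (u.mul_inv_cancel_left y)

section GradedTrace

variable {ι K A : Type*} [DecidableEq ι] [Field K] [CommRing A] [Algebra K A]
  [FiniteDimensional K A] (𝒜 : ι → Submodule K A)

theorem Algebra.trace_eq_zero_of_mem_graded [AddRightCancelMonoid ι] [GradedAlgebra 𝒜]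
    {d : ι} (hd : d ≠ 0) {z : A} (hz : z ∈ 𝒜 d) : Algebra.trace K A z = 0 :=
  LinearMap.trace_eq_zero_of_mapsTo_ne (Decomposition.isInternal 𝒜) (d + ·)
    (fun _ h => hd (add_eq_right.mp h)) (fun _ _ hx => SetLike.mul_mem_graded hz hx)

theorem Algebra.trace_decompose_zero [AddRightCancelMonoid ι] [GradedAlgebra 𝒜] (z : A) :
    Algebra.trace K A (decompose 𝒜 z 0) = Algebra.trace K A z := by
  classical
  conv_rhs => rw [← sum_support_decompose 𝒜 z, map_sum]
  by_cases h0 : 0 ∈ (decompose 𝒜 z).support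
  · rw [Finset.sum_eq_single_of_mem 0 h0 fun d _ hd =>
      trace_eq_zero_of_mem_graded 𝒜 hd (SetLike.coe_mem _)]
  · rw [DFinsupp.notMem_support_iff.mp h0, ZeroMemClass.coe_zero, map_zero]
    exact (Finset.sum_eq_zero fun d hd =>
      trace_eq_zero_of_mem_graded 𝒜 (ne_of_mem_of_not_mem hd h0) (SetLike.coe_mem _)).symm

theorem Algebra.trace_eq_card_smul_trace_gradeZero [AddCommGroup ι] [GradedAlgebra 𝒜]
    [Fintype ι] (hunit : ∀ i, ∃ u : Aˣ, (u : A) ∈ 𝒜 i) (v : 𝒜 0) :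
    Algebra.trace K A v = Fintype.card ι • Algebra.trace K (𝒜 0) v := by
  have hmaps : ∀ i, Set.MapsTo (Algebra.lmul K A v) (𝒜 i) (𝒜 i) := fun i x hx => by
    simpa using SetLike.mul_mem_graded v.2 hx
  rw [Algebra.trace_apply,
    LinearMap.trace_eq_sum_trace_restrict (Decomposition.isInternal 𝒜) hmaps,
    ← Finset.card_univ, ← Finset.sum_const]
  refine Finset.sum_congr rfl fun i _ => ?_
  obtain ⟨u, hu⟩ := hunit i
  rw [Algebra.trace_apply, ← LinearMap.trace_conj' _ (u.mulGradeZeroEquiv 𝒜 hu)]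
  congr 1
  ext y
  simp [LinearEquiv.conj_apply, Units.mulGradeZeroEquiv, mul_left_comm (u : A)]

end GradedTrace

open scoped RealInnerProductSpace in
theorem LinearMap.IsSymmetric.trace_mul_self_pos {E : Type*} [NormedAddCommGroup E]
    [InnerProductSpace ℝ E] [FiniteDimensional ℝ E] {T : E →ₗ[ℝ] E} (hT : T.IsSymmetric)
    (h0 : T ≠ 0) : 0 < LinearMap.trace ℝ E (T * T) := by
  let b := stdOrthonormalBasis ℝ E
  obtain ⟨i, hi⟩ : ∃ i, T (b i) ≠ 0 := by
    by_contra! h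
    exact h0 (b.toBasis.ext fun i => by simpa using h i)
  rw [(T * T).trace_eq_sum_inner b]
  simp_rw [Module.End.mul_apply, ← hT _ (T _), real_inner_self_eq_norm_sq]
  exact Finset.sum_pos' (fun _ _ => sq_nonneg _) ⟨i, Finset.mem_univ i, by positivity⟩

theorem Algebra.trace_mul_self_pos {B : Type*} [CommRing B] [Algebra ℝ B]
    [FiniteDimensional ℝ B] (φ : B →ₗ[ℝ] ℝ) (hφ : ∀ x : B, x ≠ 0 → 0 < φ (x * x)) {v : B}
    (hv : v ≠ 0) : 0 < Algebra.trace ℝ B (v * v) := by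
  let core : InnerProductSpace.Core ℝ B :=
    { inner x y := φ (x * y)
      conj_inner_symm x y := by simp [mul_comm]
      re_inner_nonneg x := by
        rcases eq_or_ne x 0 with rfl | hx
        · simp
        · exact (hφ x hx).le
      add_left x y z := by simp [add_mul]
      smul_left x y r := by simp
      definite x hx := by_contra fun h => (hφ x h).ne' hx }
  let _ : NormedAddCommGroup B := core.toNormedAddCommGroup
  let _ : InnerProductSpace ℝ B := .ofCore core.toCore
  rw [Algebra.trace_apply, map_mul]
  refine LinearMap.IsSymmetric.trace_mul_self_pos (fun x y => ?_) ?_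
  · show φ (v * x * y) = φ (x * (v * y))
    rw [mul_left_comm, mul_assoc]
  · exact (map_ne_zero_iff _ Algebra.lmul_injective).mpr hv

theorem isReduced_of_forall_exists_unit_mem_graded {ι A : Type*} [DecidableEq ι]
    [AddCommGroup ι] [Fintype ι] [CommRing A] [Algebra ℝ A] [FiniteDimensional ℝ A]
    (𝒜 : ι → Submodule ℝ A) [GradedAlgebra 𝒜] (hunit : ∀ i, ∃ u : Aˣ, (u : A) ∈ 𝒜 i)
    (φ : 𝒜 0 →ₗ[ℝ] ℝ) (hφ : ∀ x : 𝒜 0, x ≠ 0 → 0 < φ (x * x)) : IsReduced A := by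
  refine ⟨fun x hx => ?_⟩
  by_contra hx0
  obtain ⟨j, hj⟩ : ∃ j, (decompose 𝒜 x j : A) ≠ 0 := by
    by_contra! h
    exact hx0 ((decompose 𝒜).injective (by ext1 j; simpa using h j))
  set xj : A := ↑(decompose 𝒜 x j)
  obtain ⟨u, hu⟩ := hunit (-j)
  let v : 𝒜 0 := ⟨u * xj, by simpa using SetLike.mul_mem_graded hu (decompose 𝒜 x j).2⟩
  have hv : v ≠ 0 := fun h => hj (u.mul_right_eq_zero.mp (congrArg Subtype.val h))
  have hdeg0 : (decompose 𝒜 (x * (u * v)) 0 : A) = ↑(v * v) := by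
    have h := coe_decompose_mul_add_of_right_mem 𝒜 (i := j) (a := x)
      (by simpa using SetLike.mul_mem_graded hu v.2)
    rw [add_neg_cancel] at h
    rw [h]
    show xj * (u * (u * xj)) = u * xj * (u * xj)
    ring
  have htrace : Algebra.trace ℝ A ↑(v * v) = 0 := by
    rw [← hdeg0, Algebra.trace_decompose_zero]
    exact (Algebra.isNilpotent_trace_of_isNilpotent
      ((Commute.all _ _).isNilpotent_mul_right hx)).eq_zero
  rw [Algebra.trace_eq_card_smul_trace_gradeZero 𝒜 hunit] at htrace
  exact (nsmul_pos (Algebra.trace_mul_self_pos φ hφ hv) Fintype.card_ne_zero).ne' htrace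

/-- Let `A` be a finite-dimensional commutative unital ℝ-algebra with a
`ℤ/cℤ`-grading (`c ≥ 1`), and suppose the bilinear form `Q₀(a,b) = φ₀(ab)` on `A₀` is
positive definite for some linear form `φ₀` with `φ₀ 1 = 1`. Let `k` be an integer with
`gcd(k, c) = 1`. If there exists `a ∈ A_k` such that multiplication by `a` is injective
on `A`, then `A` is semisimple (its Jacobson radical is zero). -/
theorem semisimple_of_injective_mul_coprime_degree_element
    (c : ℕ) (hc : 1 ≤ c)
    (A : Type*) [CommRing A] [Algebra ℝ A] [FiniteDimensional ℝ A]
    (Agr : ZMod c → Submodule ℝ A)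
    (hinternal : DirectSum.IsInternal Agr)
    (hone : (1 : A) ∈ Agr 0)
    (hgrmul : ∀ (k l : ZMod c) (x y : A), x ∈ Agr k → y ∈ Agr l → x * y ∈ Agr (k + l))
    (φ0 : Agr 0 →ₗ[ℝ] ℝ)
    (hpos : ∀ (x : A) (hx : x ∈ Agr 0), x ≠ 0 →
      0 < φ0 ⟨x * x, by simpa using hgrmul 0 0 x x hx hx⟩)
    (k : ℤ) (hk : Int.gcd k c = 1)
    (a : A) (ha : a ∈ Agr (k : ZMod c))
    (hinj : Function.Injective fun x : A => a * x) :
    Ideal.jacobson (⊥ : Ideal A) = ⊥ := by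
  have : NeZero c := ⟨by omega⟩
  let _ : GradedAlgebra Agr :=
    { hinternal.chooseDecomposition with
      one_mem := hone
      mul_mem := fun _ _ _ _ => hgrmul _ _ _ _ }
  have : IsArtinianRing A := .of_finite ℝ A
  obtain ⟨a, rfl⟩ : IsUnit a :=
    IsArtinianRing.isUnit_iff_isRegular.mpr (isLeftRegular_iff_isRegular.mp hinj)
  have hunit := exists_unit_mem_graded_of_isCoprime Agr (Int.isCoprime_iff_gcd_eq_one.mpr hk) ha
  have : IsReduced A := isReduced_of_forall_exists_unit_mem_graded Agr hunit φ0
    fun x hx => hpos x x.2 (by simpa using hx)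
  rw [IsArtinianRing.jacobson_eq_radical]
  exact nilradical_eq_zero A
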